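/- arXiv:1403.2186 — 5 statements merged into one kernel-verified Lean document; each statement's English description precedes it below -/
import Mathlib

section
/- If U is a feasible solution of M-CLP and P is a feasible solution of M-CLP*, then the dual objective is at least the primal objective: ∫₀ᵀ (β+(T−t)b)ᵀ dP(t) ≥ ∫₀ᵀ (γ+(T−t)c)ᵀ dU(t) (weak duality). -/
/-!
Write `F_k(t) = ∑ⱼ A k j U_j(t)` and `G_j(t) = ∑ₖ A k j P_k(t)`. Dual feasibility bounds the primal
integrand by `G_j(T - t)` and primal feasibility bounds `F_k(T - t)` by the dual integrand, so it
suffices that `∫_{[0,T]} P_k(T - t) dU_j(t) = ∫_{[0,T]} U_j(T - t) dP_k(t)`. Since `U_j(0-) = 0`,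
`U_j(T - t) = dU_j([0, T - t])`, so both sides equal the `dU_j ⊗ dP_k`-measure of the triangle
`{(s, t) ∈ [0,T]² | s + t ≤ T}` by Tonelli.
-/

open MeasureTheory Set

/-- Objective of M-CLP type: ∑_j ∫_{[0,T]} (g j + (T-t) * c j) d(U j)(t),
where each `U j` is a Stieltjes function (nondecreasing, right continuous). -/
noncomputable def mclpObj {n : ℕ} (T : ℝ) (g c : Fin n → ℝ)
    (U : Fin n → StieltjesFunction ℝ) : ℝ :=
  ∑ j, ∫ t in Icc (0:ℝ) T, (g j + (T - t) * c j) ∂(U j).measure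

/-- Feasibility for M-CLP: U vanishes before 0 (so U(0-)=0), is nonnegative,
and A U(t) ≤ β + b t on [0,T]. Monotonicity and right continuity are part of
`StieltjesFunction`. -/
def mclpFeasible {K J : ℕ} (A : Matrix (Fin K) (Fin J) ℝ) (β b : Fin K → ℝ)
    (T : ℝ) (U : Fin J → StieltjesFunction ℝ) : Prop :=
  (∀ j, ∀ t < (0:ℝ), U j t = 0) ∧ (∀ j t, 0 ≤ U j t) ∧
  ∀ t ∈ Icc (0:ℝ) T, ∀ k, (∑ j, A k j * U j t) ≤ β k + b k * t

/-- Feasibility for the dual M-CLP*: P vanishes before 0, is nonnegative,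
and Aᵀ P(t) ≥ γ + c t on [0,T]. -/
def mclpDualFeasible {K J : ℕ} (A : Matrix (Fin K) (Fin J) ℝ) (γ c : Fin J → ℝ)
    (T : ℝ) (P : Fin K → StieltjesFunction ℝ) : Prop :=
  (∀ k, ∀ t < (0:ℝ), P k t = 0) ∧ (∀ k t, 0 ≤ P k t) ∧
  ∀ t ∈ Icc (0:ℝ) T, ∀ j, γ j + c j * t ≤ ∑ k, A k j * P k t

open Filter

namespace StieltjesFunction

variable (f g : StieltjesFunction ℝ)

lemma leftLim_zero_eq_zero (hf : ∀ t < 0, f t = 0) : Function.leftLim f 0 = 0 :=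
  leftLim_eq_of_tendsto <| tendsto_const_nhds.congr' <|
    eventuallyEq_of_mem self_mem_nhdsWithin fun t ht => (hf t ht).symm

lemma nonneg_of_eq_zero_of_neg (hf : ∀ t < 0, f t = 0) (t : ℝ) : 0 ≤ f t := by
  rcases lt_or_ge t 0 with ht | ht
  · exact (hf t ht).ge
  · calc 0 = f (-1) := (hf (-1) (by norm_num)).symm
      _ ≤ f t := f.mono (by linarith)

lemma measure_Icc_zero (hf : ∀ t < 0, f t = 0) (x : ℝ) :
    f.measure (Icc 0 x) = ENNReal.ofReal (f x) := by
  rw [f.measure_Icc, f.leftLim_zero_eq_zero hf, sub_zero]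

lemma integrableOn_comp_const_sub (T : ℝ) {s : Set ℝ} (hs : IsCompact s) :
    IntegrableOn (fun t => g (T - t)) s f.measure :=
  AntitoneOn.integrableOn_isCompact hs fun _ _ _ _ hxy => g.mono (by linarith)

lemma lintegral_comp_const_sub_eq_measure_prod (hg : ∀ t < 0, g t = 0) (T : ℝ) :
    ∫⁻ t in Icc 0 T, ENNReal.ofReal (g (T - t)) ∂f.measure =
      ((f.measure.restrict (Icc 0 T)).prod (g.measure.restrict (Icc 0 T)))
        {p | p.1 + p.2 ≤ T} := by
  rw [Measure.prod_apply (measurableSet_le (by fun_prop) measurable_const)]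
  refine setLIntegral_congr_fun measurableSet_Icc fun t ht => ?_
  have hslice : Prod.mk t ⁻¹' {p : ℝ × ℝ | p.1 + p.2 ≤ T} ∩ Icc 0 T = Icc 0 (T - t) := by
    ext s
    simp only [mem_inter_iff, mem_preimage, mem_ofPred_eq, mem_Icc]
    constructor
    · rintro ⟨hsum, hs0, -⟩
      exact ⟨hs0, by linarith⟩
    · rintro ⟨hs0, hsT⟩
      exact ⟨by linarith, hs0, by linarith [ht.1]⟩
  rw [Measure.restrict_apply' measurableSet_Icc, hslice, g.measure_Icc_zero hg]

lemma setIntegral_comp_const_sub_comm (hf : ∀ t < 0, f t = 0) (hg : ∀ t < 0, g t = 0)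
    (T : ℝ) :
    ∫ t in Icc 0 T, g (T - t) ∂f.measure = ∫ t in Icc 0 T, f (T - t) ∂g.measure := by
  have hmeas : ∀ h : StieltjesFunction ℝ, Measurable fun t => h (T - t) := fun h =>
    h.mono.measurable.comp (measurable_const.sub measurable_id)
  rw [integral_eq_lintegral_of_nonneg_ae (ae_of_all _ fun t => g.nonneg_of_eq_zero_of_neg hg _)
      (hmeas g).aestronglyMeasurable,
    integral_eq_lintegral_of_nonneg_ae (ae_of_all _ fun t => f.nonneg_of_eq_zero_of_neg hf _)
      (hmeas f).aestronglyMeasurable,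
    f.lintegral_comp_const_sub_eq_measure_prod g hg,
    g.lintegral_comp_const_sub_eq_measure_prod f hf,
    ← Measure.prod_swap, Measure.map_apply measurable_swap
      (measurableSet_le (by fun_prop) measurable_const)]
  congr 2
  ext p
  simp only [mem_preimage, mem_ofPred_eq, Prod.fst_swap, Prod.snd_swap, add_comm]

end StieltjesFunction

lemma setIntegral_sum_mul_comp_const_sub {ι : Type*} [Fintype ι] (a : ι → ℝ)
    (V : StieltjesFunction ℝ) (W : ι → StieltjesFunction ℝ) (T : ℝ) :
    ∫ t in Icc 0 T, ∑ i, a i * W i (T - t) ∂V.measure =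
      ∑ i, a i * ∫ t in Icc 0 T, W i (T - t) ∂V.measure := by
  rw [integral_finsetSum _ fun i _ =>
    (V.integrableOn_comp_const_sub (W i) T isCompact_Icc).const_mul (a i)]
  simp only [integral_const_mul]

section

variable {K J : ℕ} (A : Matrix (Fin K) (Fin J) ℝ) (T : ℝ)
  (U : Fin J → StieltjesFunction ℝ) (P : Fin K → StieltjesFunction ℝ)

lemma sum_setIntegral_matrix_comp_const_sub_comm (hU : ∀ j, ∀ t < 0, U j t = 0)
    (hP : ∀ k, ∀ t < 0, P k t = 0) :
    ∑ j, ∫ t in Icc 0 T, ∑ k, A k j * P k (T - t) ∂(U j).measure =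
      ∑ k, ∫ t in Icc 0 T, ∑ j, A k j * U j (T - t) ∂(P k).measure := by
  simp only [setIntegral_sum_mul_comp_const_sub]
  rw [Finset.sum_comm]
  simp only [(U _).setIntegral_comp_const_sub_comm (P _) (hU _) (hP _)]

lemma mclpObj_le_sum_setIntegral_of_dualFeasible {γ c : Fin J → ℝ}
    (hP : mclpDualFeasible A γ c T P) :
    mclpObj T γ c U ≤ ∑ j, ∫ t in Icc 0 T, ∑ k, A k j * P k (T - t) ∂(U j).measure := by
  refine Finset.sum_le_sum fun j _ => setIntegral_mono_on ?_ ?_ measurableSet_Icc fun t ht => ?_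
  · exact Continuous.integrableOn_Icc (by fun_prop)
  · exact integrable_finsetSum _ fun k _ =>
      ((U j).integrableOn_comp_const_sub (P k) T isCompact_Icc).const_mul _
  · have := hP.2.2 (T - t) ⟨by linarith [ht.2], by linarith [ht.1]⟩ j
    linarith

lemma sum_setIntegral_le_mclpObj_of_feasible {β b : Fin K → ℝ}
    (hU : mclpFeasible A β b T U) :
    ∑ k, ∫ t in Icc 0 T, ∑ j, A k j * U j (T - t) ∂(P k).measure ≤ mclpObj T β b P := by
  refine Finset.sum_le_sum fun k _ => setIntegral_mono_on ?_ ?_ measurableSet_Icc fun t ht => ?_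
  · exact integrable_finsetSum _ fun j _ =>
      ((P k).integrableOn_comp_const_sub (U j) T isCompact_Icc).const_mul _
  · exact Continuous.integrableOn_Icc (by fun_prop)
  · have := hU.2.2 (T - t) ⟨by linarith [ht.2], by linarith [ht.1]⟩ k
    linarith

end

theorem mclp_weak_duality_general {K J : ℕ} (A : Matrix (Fin K) (Fin J) ℝ)
    (β b : Fin K → ℝ) (γ c : Fin J → ℝ) (T : ℝ)
    (U : Fin J → StieltjesFunction ℝ) (P : Fin K → StieltjesFunction ℝ)
    (hU : mclpFeasible A β b T U) (hP : mclpDualFeasible A γ c T P) :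
    mclpObj T γ c U ≤ mclpObj T β b P :=
  calc mclpObj T γ c U
      ≤ ∑ j, ∫ t in Icc 0 T, ∑ k, A k j * P k (T - t) ∂(U j).measure :=
        mclpObj_le_sum_setIntegral_of_dualFeasible A T U P hP
    _ = ∑ k, ∫ t in Icc 0 T, ∑ j, A k j * U j (T - t) ∂(P k).measure :=
        sum_setIntegral_matrix_comp_const_sub_comm A T U P hU.1 hP.1
    _ ≤ mclpObj T β b P := sum_setIntegral_le_mclpObj_of_feasible A T U P hU

/-- Weak duality for M-CLP/M-CLP*. -/
theorem mclp_weak_duality {K J : ℕ} (A : Matrix (Fin K) (Fin J) ℝ)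
    (β b : Fin K → ℝ) (γ c : Fin J → ℝ) (T : ℝ) (hT : 0 ≤ T)
    (U : Fin J → StieltjesFunction ℝ) (P : Fin K → StieltjesFunction ℝ)
    (hU : mclpFeasible A β b T U) (hP : mclpDualFeasible A γ c T P) :
    mclpObj T γ c U ≤ mclpObj T β b P :=
  mclp_weak_duality_general A β b γ c T U P hU hP
end

section
/- If U is feasible for M-CLP with slack x(t)=β+bt−AU(t), P is feasible for M-CLP* with slack q(t)=γ+ct−AᵀP(t), and the complementary slackness conditions ∫₀ᵀ x(T−t)ᵀ dP(t) = 0 and ∫₀ᵀ q(T−t)ᵀ dU(t) = 0 hold, then U is optimal for M-CLP and P is optimal for M-CLP*. -/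
/-!
Integrating the dual constraint `Aᵀ P(T - t) ≥ γ + c (T - t)` against `dU(t)` and the primal constraint
`A U(T - t) ≤ β + b (T - t)` against `dP(t)` gives two bounds on the same quantity, because
`∫₀ᵀ P(T - t) dU(t) = ∫₀ᵀ U(T - t) dP(t)`: both are the `dU ⊗ dP`-mass of the triangle
`{s, t ≥ 0, s + t ≤ T}`. Hence the duality gap of any feasible pair is the sum of the integrated slacks,
which is nonnegative, and complementary slackness makes it vanish.
-/

open MeasureTheory Set

lemma lintegral_measure_Icc_sub_comm (μ ν : Measure ℝ) [SFinite μ] [SFinite ν] (T : ℝ) :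
    ∫⁻ t in Icc 0 T, μ (Icc 0 (T - t)) ∂ν = ∫⁻ t in Icc 0 T, ν (Icc 0 (T - t)) ∂μ := by
  set S : Set (ℝ × ℝ) := {p | 0 ≤ p.1 ∧ 0 ≤ p.2 ∧ p.1 + p.2 ≤ T}
  have hS : MeasurableSet S :=
    (measurableSet_le measurable_const measurable_fst).inter <|
      (measurableSet_le measurable_const measurable_snd).inter <|
        measurableSet_le (measurable_fst.add measurable_snd) measurable_const
  have hsection : ∀ t, 0 ≤ t →
      (fun s => (s, t)) ⁻¹' S = Icc 0 (T - t) ∧ Prod.mk t ⁻¹' S = Icc 0 (T - t) := by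
    intro t ht
    constructor <;> ext s <;> simp only [S, mem_preimage, mem_ofPred_eq, mem_Icc] <;> grind
  have hrestrict : ∀ t ∈ Icc 0 T, ∀ ρ : Measure ℝ,
      ρ.restrict (Icc 0 T) (Icc 0 (T - t)) = ρ (Icc 0 (T - t)) := fun t ht ρ =>
    Measure.restrict_eq_self _ (Icc_subset_Icc_right (by linarith [ht.1]))
  calc ∫⁻ t in Icc 0 T, μ (Icc 0 (T - t)) ∂ν
      = ((μ.restrict (Icc 0 T)).prod (ν.restrict (Icc 0 T))) S := by
        rw [Measure.prod_apply_symm hS]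
        refine (setLIntegral_congr_fun measurableSet_Icc fun t ht => ?_).symm
        rw [(hsection t ht.1).1, hrestrict t ht]
    _ = ∫⁻ t in Icc 0 T, ν (Icc 0 (T - t)) ∂μ := by
        rw [Measure.prod_apply hS]
        refine setLIntegral_congr_fun measurableSet_Icc fun t ht => ?_
        rw [(hsection t ht.1).2, hrestrict t ht]

namespace StieltjesFunction

variable (F G : StieltjesFunction ℝ)

lemma leftLim_zero_eq_zero_s1 (hF : ∀ t < 0, F t = 0) : Function.leftLim F 0 = 0 :=
  leftLim_eq_of_tendsto <|
    tendsto_const_nhds.congr' (eventually_nhdsWithin_of_forall fun t ht => (hF t ht).symm)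

lemma nonneg_of_eq_zero_of_neg_s1 (hF : ∀ t < 0, F t = 0) (t : ℝ) : 0 ≤ F t :=
  hF (min t 0 - 1) (by linarith [min_le_right t 0]) ▸ F.mono (by linarith [min_le_left t 0])

lemma measure_Icc_zero_s1 (hF : ∀ t < 0, F t = 0) (s : ℝ) :
    F.measure (Icc 0 s) = ENNReal.ofReal (F s) := by
  rw [measure_Icc, leftLim_zero_eq_zero_s1 F hF, sub_zero]

lemma integrableOn_comp_sub (μ : Measure ℝ) [IsLocallyFiniteMeasure μ] (T a b : ℝ) :
    IntegrableOn (fun t => F (T - t)) (Icc a b) μ :=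
  (Antitone.locallyIntegrable fun _ _ h => F.mono (by linarith)).integrableOn_isCompact
    isCompact_Icc

lemma integral_comp_sub_eq_toReal_lintegral (hF : ∀ t < 0, F t = 0) (μ : Measure ℝ) (T : ℝ) :
    ∫ t in Icc 0 T, F (T - t) ∂μ = (∫⁻ t in Icc 0 T, F.measure (Icc 0 (T - t)) ∂μ).toReal := by
  rw [integral_eq_lintegral_of_nonneg_ae (ae_of_all _ fun t => F.nonneg_of_eq_zero_of_neg_s1 hF _)
    (Antitone.measurable fun _ _ h => F.mono (by linarith)).aestronglyMeasurable]
  simp only [F.measure_Icc_zero_s1 hF]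

lemma integral_comp_sub_comm (hF : ∀ t < 0, F t = 0) (hG : ∀ t < 0, G t = 0) (T : ℝ) :
    ∫ t in Icc 0 T, F (T - t) ∂G.measure = ∫ t in Icc 0 T, G (T - t) ∂F.measure := by
  rw [F.integral_comp_sub_eq_toReal_lintegral hF, G.integral_comp_sub_eq_toReal_lintegral hG,
    lintegral_measure_Icc_sub_comm]

end StieltjesFunction

lemma integral_sum_mul_comp_sub {ι : Type*} [Fintype ι] (F : ι → StieltjesFunction ℝ)
    (a : ι → ℝ) (μ : Measure ℝ) [IsLocallyFiniteMeasure μ] (T : ℝ) :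
    ∫ t in Icc 0 T, ∑ i, a i * F i (T - t) ∂μ = ∑ i, a i * ∫ t in Icc 0 T, F i (T - t) ∂μ := by
  rw [integral_finsetSum _ fun i _ => ((F i).integrableOn_comp_sub μ T 0 T).const_mul (a i)]
  simp only [integral_const_mul]

section Slack

variable {K J : ℕ} (A : Matrix (Fin K) (Fin J) ℝ)

def primalSlack (β b : Fin K → ℝ) (U : Fin J → StieltjesFunction ℝ) (k : Fin K) (s : ℝ) : ℝ :=
  β k + b k * s - ∑ j, A k j * U j s

def dualSlack (γ c : Fin J → ℝ) (P : Fin K → StieltjesFunction ℝ) (j : Fin J) (s : ℝ) : ℝ :=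
  (∑ k, A k j * P k s) - γ j - c j * s

variable {A}

lemma primalSlack_nonneg {β b : Fin K → ℝ} {T : ℝ} {U : Fin J → StieltjesFunction ℝ}
    (hU : mclpFeasible A β b T U) {s : ℝ} (hs : s ∈ Icc 0 T) (k : Fin K) :
    0 ≤ primalSlack A β b U k s :=
  sub_nonneg.2 (hU.2.2 s hs k)

lemma dualSlack_nonneg {γ c : Fin J → ℝ} {T : ℝ} {P : Fin K → StieltjesFunction ℝ}
    (hP : mclpDualFeasible A γ c T P) {s : ℝ} (hs : s ∈ Icc 0 T) (j : Fin J) :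
    0 ≤ dualSlack A γ c P j s := by
  have := hP.2.2 s hs j
  unfold dualSlack
  linarith

variable (β b : Fin K → ℝ) (γ c : Fin J → ℝ) (T : ℝ)
  (U : Fin J → StieltjesFunction ℝ) (P : Fin K → StieltjesFunction ℝ)

lemma integral_primalSlack_comp_sub (μ : Measure ℝ) [IsLocallyFiniteMeasure μ] (k : Fin K) :
    ∫ t in Icc 0 T, primalSlack A β b U k (T - t) ∂μ
      = ∫ t in Icc 0 T, (β k + (T - t) * b k) ∂μ
        - ∑ j, A k j * ∫ t in Icc 0 T, U j (T - t) ∂μ := by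
  rw [← integral_sum_mul_comp_sub, ← integral_sub (Continuous.integrableOn_Icc (by fun_prop)) <|
    integrable_finsetSum _ fun j _ => ((U j).integrableOn_comp_sub μ T 0 T).const_mul _]
  simp only [primalSlack, mul_comm (b k)]

lemma integral_dualSlack_comp_sub (μ : Measure ℝ) [IsLocallyFiniteMeasure μ] (j : Fin J) :
    ∫ t in Icc 0 T, dualSlack A γ c P j (T - t) ∂μ
      = ∑ k, A k j * ∫ t in Icc 0 T, P k (T - t) ∂μ
        - ∫ t in Icc 0 T, (γ j + (T - t) * c j) ∂μ := by
  rw [← integral_sum_mul_comp_sub, ← integral_sub (integrable_finsetSum _ fun k _ =>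
    ((P k).integrableOn_comp_sub μ T 0 T).const_mul _) (Continuous.integrableOn_Icc (by fun_prop))]
  simp only [dualSlack, sub_sub, mul_comm (c j)]

lemma mclpObj_sub_mclpObj_eq (hU : ∀ j, ∀ t < 0, U j t = 0) (hP : ∀ k, ∀ t < 0, P k t = 0) :
    mclpObj T β b P - mclpObj T γ c U
      = ∑ k, ∫ t in Icc 0 T, primalSlack A β b U k (T - t) ∂(P k).measure
        + ∑ j, ∫ t in Icc 0 T, dualSlack A γ c P j (T - t) ∂(U j).measure := by
  simp only [integral_primalSlack_comp_sub, integral_dualSlack_comp_sub, Finset.sum_sub_distrib,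
    mclpObj, (P _).integral_comp_sub_comm (U _) (hP _) (hU _)]
  rw [Finset.sum_comm (γ := Fin K)]
  ring

end Slack

lemma mclpObj_le_mclpObj_of_feasible {K J : ℕ} {A : Matrix (Fin K) (Fin J) ℝ}
    {β b : Fin K → ℝ} {γ c : Fin J → ℝ} {T : ℝ}
    {U : Fin J → StieltjesFunction ℝ} {P : Fin K → StieltjesFunction ℝ}
    (hU : mclpFeasible A β b T U) (hP : mclpDualFeasible A γ c T P) :
    mclpObj T γ c U ≤ mclpObj T β b P := by
  have hreflect : ∀ t ∈ Icc 0 T, T - t ∈ Icc 0 T := fun t ht =>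
    ⟨by linarith [ht.2], by linarith [ht.1]⟩
  rw [← sub_nonneg, mclpObj_sub_mclpObj_eq β b γ c T U P hU.1 hP.1]
  exact add_nonneg
    (Finset.sum_nonneg fun k _ => setIntegral_nonneg measurableSet_Icc fun t ht =>
      primalSlack_nonneg hU (hreflect t ht) k)
    (Finset.sum_nonneg fun j _ => setIntegral_nonneg measurableSet_Icc fun t ht =>
      dualSlack_nonneg hP (hreflect t ht) j)

theorem mclp_compslack_optimal_general {K J : ℕ} (A : Matrix (Fin K) (Fin J) ℝ)
    (β b : Fin K → ℝ) (γ c : Fin J → ℝ) (T : ℝ)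
    (U : Fin J → StieltjesFunction ℝ) (P : Fin K → StieltjesFunction ℝ)
    (hU : mclpFeasible A β b T U) (hP : mclpDualFeasible A γ c T P)
    -- primal slack x and dual slack q
    (x : Fin K → ℝ → ℝ) (hx : ∀ k s, x k s = β k + b k * s - ∑ j, A k j * U j s)
    (q : Fin J → ℝ → ℝ) (hq : ∀ j s, q j s = (∑ k, A k j * P k s) - γ j - c j * s)
    -- complementary slackness
    (hcs1 : (∑ k, ∫ t in Icc (0:ℝ) T, x k (T - t) ∂(P k).measure) = 0)
    (hcs2 : (∑ j, ∫ t in Icc (0:ℝ) T, q j (T - t) ∂(U j).measure) = 0) :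
    (∀ U' : Fin J → StieltjesFunction ℝ, mclpFeasible A β b T U' →
        mclpObj T γ c U' ≤ mclpObj T γ c U) ∧
    (∀ P' : Fin K → StieltjesFunction ℝ, mclpDualFeasible A γ c T P' →
        mclpObj T β b P ≤ mclpObj T β b P') := by
  obtain rfl : x = primalSlack A β b U := funext fun k => funext (hx k)
  obtain rfl : q = dualSlack A γ c P := funext fun j => funext (hq j)
  have hgap : mclpObj T β b P = mclpObj T γ c U := by
    rw [← sub_eq_zero, mclpObj_sub_mclpObj_eq β b γ c T U P hU.1 hP.1, hcs1, hcs2, add_zero]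
  exact ⟨fun U' hU' => hgap ▸ mclpObj_le_mclpObj_of_feasible hU' hP,
    fun P' hP' => hgap ▸ mclpObj_le_mclpObj_of_feasible hU hP'⟩

/-- Complementary slack feasible solutions of M-CLP/M-CLP* are optimal. -/
theorem mclp_compslack_optimal {K J : ℕ} (A : Matrix (Fin K) (Fin J) ℝ)
    (β b : Fin K → ℝ) (γ c : Fin J → ℝ) (T : ℝ) (hT : 0 ≤ T)
    (U : Fin J → StieltjesFunction ℝ) (P : Fin K → StieltjesFunction ℝ)
    (hU : mclpFeasible A β b T U) (hP : mclpDualFeasible A γ c T P)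
    -- primal slack x and dual slack q
    (x : Fin K → ℝ → ℝ) (hx : ∀ k s, x k s = β k + b k * s - ∑ j, A k j * U j s)
    (q : Fin J → ℝ → ℝ) (hq : ∀ j s, q j s = (∑ k, A k j * P k s) - γ j - c j * s)
    -- complementary slackness
    (hcs1 : (∑ k, ∫ t in Icc (0:ℝ) T, x k (T - t) ∂(P k).measure) = 0)
    (hcs2 : (∑ j, ∫ t in Icc (0:ℝ) T, q j (T - t) ∂(U j).measure) = 0) :
    (∀ U' : Fin J → StieltjesFunction ℝ, mclpFeasible A β b T U' →
        mclpObj T γ c U' ≤ mclpObj T γ c U) ∧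
    (∀ P' : Fin K → StieltjesFunction ℝ, mclpDualFeasible A γ c T P' →
        mclpObj T β b P ≤ mclpObj T β b P') :=
  mclp_compslack_optimal_general A β b γ c T U P hU hP x hx q hq hcs1 hcs2
end

section
/- M-CLP is feasible if and only if the standard linear program Test-LP is feasible, where Test-LP asks for vectors u, U ∈ ℝ^J with u, U ≥ 0, A u ≤ β, and A u + A U ≤ β + bT. -/
/-!
A feasible `U` yields the Test-LP solution `u = U 0`, `U = U T - U 0`, since the constraints at
`t = 0` and `t = T` are exactly the two Test-LP constraints. Conversely, a Test-LP solution is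
interpolated linearly, `U t = u + (t / T) • U` on `[0, T]`: the constraint at time `t` is then the
convex combination with weight `t / T` of the two Test-LP constraints, and its right-hand side
`β + b t` is affine in `t`.
-/

open MeasureTheory Set

namespace StieltjesFunction

variable {R : Type*} [LinearOrder R]

theorem indicator_Ici_nonneg_of_monotoneOn {a : R} {g : R → ℝ} (hmono : MonotoneOn g (Ici a))
    (hnonneg : 0 ≤ g a) (x : R) : 0 ≤ (Ici a).indicator g x :=
  indicator_nonneg (fun _ hz => hnonneg.trans (hmono self_mem_Ici hz hz)) x

variable [TopologicalSpace R] [OrderTopology R]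

noncomputable def indicatorIci (a : R) (g : R → ℝ) (hmono : MonotoneOn g (Ici a))
    (hcont : ContinuousOn g (Ici a)) (hnonneg : 0 ≤ g a) : StieltjesFunction R where
  toFun := (Ici a).indicator g
  mono' x y hxy := by
    by_cases hx : x ∈ Ici a
    · have hy : y ∈ Ici a := mem_Ici.2 (le_trans hx hxy)
      rw [indicator_of_mem hx, indicator_of_mem hy]
      exact hmono hx hy hxy
    · rw [indicator_of_notMem hx]
      exact indicator_Ici_nonneg_of_monotoneOn hmono hnonneg y
  right_continuous' x := by
    by_cases hx : x ∈ Ici a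
    · refine ((hcont x hx).mono (Ici_subset_Ici.2 hx)).congr (fun y hy => ?_) ?_
      · exact indicator_of_mem (mem_Ici.2 (le_trans hx hy)) g
      · exact indicator_of_mem hx g
    · have hzero : (Ici a).indicator g =ᶠ[nhds x] fun _ => 0 := by
        filter_upwards [isOpen_Iio.mem_nhds (not_le.1 hx)] with y hy
        exact indicator_of_notMem (not_le.2 hy) g
      exact (continuousAt_const.congr hzero.symm).continuousWithinAt

theorem indicatorIci_apply {a : R} {g : R → ℝ} (hmono : MonotoneOn g (Ici a))
    (hcont : ContinuousOn g (Ici a)) (hnonneg : 0 ≤ g a) (x : R) :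
    indicatorIci a g hmono hcont hnonneg x = (Ici a).indicator g x :=
  rfl

theorem indicatorIci_nonneg {a : R} {g : R → ℝ} (hmono : MonotoneOn g (Ici a))
    (hcont : ContinuousOn g (Ici a)) (hnonneg : 0 ≤ g a) (x : R) :
    0 ≤ indicatorIci a g hmono hcont hnonneg x :=
  indicator_Ici_nonneg_of_monotoneOn hmono hnonneg x

noncomputable def ramp (c D T : ℝ) (hc : 0 ≤ c) (hD : 0 ≤ D) (hT : 0 ≤ T) :
    StieltjesFunction ℝ :=
  indicatorIci 0 (fun t => c + min t T / T * D)
    (Monotone.monotoneOn (fun x y hxy => by gcongr) _)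
    (by fun_prop)
    (by simpa [min_eq_left hT] using hc)

theorem ramp_apply_of_mem_Icc {c D T : ℝ} (hc : 0 ≤ c) (hD : 0 ≤ D) (hT : 0 ≤ T) {t : ℝ}
    (ht : t ∈ Icc 0 T) : ramp c D T hc hD hT t = c + t / T * D := by
  rw [ramp, indicatorIci_apply, indicator_of_mem (mem_Ici.2 ht.1), min_eq_left ht.2]

theorem ramp_apply_of_neg {c D T : ℝ} (hc : 0 ≤ c) (hD : 0 ≤ D) (hT : 0 ≤ T) {t : ℝ}
    (ht : t < 0) : ramp c D T hc hD hT t = 0 := by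
  rw [ramp, indicatorIci_apply, indicator_of_notMem (notMem_Ici.2 ht)]

theorem ramp_nonneg {c D T : ℝ} (hc : 0 ≤ c) (hD : 0 ≤ D) (hT : 0 ≤ T) (t : ℝ) :
    0 ≤ ramp c D T hc hD hT t :=
  indicatorIci_nonneg _ _ _ t

end StieltjesFunction

section TestLP

variable {K J : ℕ} (A : Matrix (Fin K) (Fin J) ℝ) (β b : Fin K → ℝ) (T : ℝ)

def testLPFeasible (u U : Fin J → ℝ) : Prop :=
  (∀ j, 0 ≤ u j) ∧ (∀ j, 0 ≤ U j) ∧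
    (∀ k, (∑ j, A k j * u j) ≤ β k) ∧
    (∀ k, (∑ j, A k j * (u j + U j)) ≤ β k + b k * T)

variable {A β b T}

theorem mclpFeasible.testLPFeasible {U : Fin J → StieltjesFunction ℝ} (hT : 0 ≤ T)
    (hU : mclpFeasible A β b T U) :
    testLPFeasible A β b T (fun j => U j 0) (fun j => U j T - U j 0) := by
  obtain ⟨-, hnonneg, hconstr⟩ := hU
  refine ⟨fun j => hnonneg j 0, fun j => sub_nonneg.2 ((U j).mono hT), fun k => ?_, fun k => ?_⟩
  · simpa using hconstr 0 ⟨le_rfl, hT⟩ k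
  · simpa using hconstr T ⟨hT, le_rfl⟩ k

theorem testLPFeasible.sum_interpolate_le {u U : Fin J → ℝ} (h : testLPFeasible A β b T u U)
    {s : ℝ} (hs₀ : 0 ≤ s) (hs₁ : s ≤ 1) (k : Fin K) :
    ∑ j, A k j * (u j + s * U j) ≤ β k + b k * (s * T) := by
  obtain ⟨-, -, h₀, h₁⟩ := h
  have h1s : 0 ≤ 1 - s := sub_nonneg.2 hs₁
  calc ∑ j, A k j * (u j + s * U j)
      = (1 - s) * ∑ j, A k j * u j + s * ∑ j, A k j * (u j + U j) := by
        simp only [Finset.mul_sum, ← Finset.sum_add_distrib]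
        exact Finset.sum_congr rfl fun j _ => by ring
    _ ≤ (1 - s) * β k + s * (β k + b k * T) := by gcongr; exacts [h₀ k, h₁ k]
    _ = β k + b k * (s * T) := by ring

theorem testLPFeasible.mclpFeasible_ramp (hT : 0 ≤ T) {u U : Fin J → ℝ}
    (h : testLPFeasible A β b T u U) :
    mclpFeasible A β b T fun j => StieltjesFunction.ramp (u j) (U j) T (h.1 j) (h.2.1 j) hT := by
  refine ⟨fun j t ht => ?_, fun j t => ?_, fun t ht k => ?_⟩
  · exact StieltjesFunction.ramp_apply_of_neg _ _ hT ht
  · exact StieltjesFunction.ramp_nonneg _ _ hT t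
  · simp only [StieltjesFunction.ramp_apply_of_mem_Icc _ _ hT ht]
    have hsT : t / T * T = t := div_mul_cancel_of_imp fun hT0 => le_antisymm (hT0 ▸ ht.2) ht.1
    simpa [hsT] using h.sum_interpolate_le (div_nonneg ht.1 hT) (div_le_one_of_le₀ ht.2 hT) k

end TestLP

/-- M-CLP is feasible iff the Test-LP is feasible. -/
theorem mclp_feasible_iff_testLP {K J : ℕ} (A : Matrix (Fin K) (Fin J) ℝ)
    (β b : Fin K → ℝ) (T : ℝ) (hT : 0 < T) :
    (∃ U : Fin J → StieltjesFunction ℝ, mclpFeasible A β b T U) ↔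
    (∃ u U : Fin J → ℝ, (∀ j, 0 ≤ u j) ∧ (∀ j, 0 ≤ U j) ∧
      (∀ k, (∑ j, A k j * u j) ≤ β k) ∧
      (∀ k, (∑ j, A k j * (u j + U j)) ≤ β k + b k * T)) := by
  constructor
  · rintro ⟨U, hU⟩
    exact ⟨_, _, hU.testLPFeasible hT.le⟩
  · rintro ⟨u, U, h⟩
    exact ⟨_, testLPFeasible.mclpFeasible_ramp hT.le h⟩
end

section
/- If an SCLP problem (with data G, α, a, γ, c and no F, H, b, d components) has a feasible solution u(t), x(t), then its M-CLP extension is feasible: defining Ũ*(t) = (t/T)∫₀ᵀ u(s)ds and Ũ_f(t) = x(0) + (t/T)(x(T) − x(0)) = Ũ⁺(t) − Ũ⁻(t) with Ũ⁺, Ũ⁻ nondecreasing, the resulting Ũ satisfies the M-CLP extension constraints. -/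
/-!
The extension constraint holds with equality. Averaging the control over `[0, T]` gives
`G Ũ*(t) = (t/T) ∫₀ᵀ G u`, and by the definition of `x` the affine interpolation of
`x(0) = α` and `x(T) = α + a T - ∫₀ᵀ G u` adds exactly `α + a t - (t/T) ∫₀ᵀ G u`.
Nonnegativity and monotonicity of `Ũ*` come from `u ≥ 0`, and the affine free part is split
as the difference of the positive and negative parts of its intercept and slope.
-/

open Set MeasureTheory

theorem exists_monotone_nonneg_sub_eq_affine (c d : ℝ) :
    ∃ p m : ℝ → ℝ, Monotone p ∧ Monotone m ∧ (∀ t, 0 ≤ t → 0 ≤ p t ∧ 0 ≤ m t) ∧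
      ∀ t, p t - m t = c + t * d := by
  refine ⟨fun t => c⁺ + t * d⁺, fun t => c⁻ + t * d⁻, ?_, ?_, ?_, ?_⟩
  · exact fun t₁ t₂ h => by dsimp only; gcongr
  · exact fun t₁ t₂ h => by dsimp only; gcongr
  · exact fun t ht => ⟨by positivity, by positivity⟩
  · intro t
    calc c⁺ + t * d⁺ - (c⁻ + t * d⁻) = (c⁺ - c⁻) + t * (d⁺ - d⁻) := by ring
      _ = c + t * d := by rw [posPart_sub_negPart, posPart_sub_negPart]

theorem Matrix.mulVec_intervalIntegral {m n : Type*} [Fintype n] (G : Matrix m n ℝ)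
    {u : ℝ → n → ℝ} {a b : ℝ} (hu : ∀ j, IntervalIntegrable (fun s => u s j) volume a b)
    (k : m) :
    G.mulVec (fun j => ∫ s in a..b, u s j) k = ∫ s in a..b, G.mulVec (u s) k := by
  simp only [Matrix.mulVec, dotProduct]
  rw [intervalIntegral.integral_finsetSum fun j _ => (hu j).const_mul _]
  simp only [intervalIntegral.integral_const_mul]

theorem sclp_feasible_implies_mclp_extension_feasible_general {K J : ℕ}
    (G : Matrix (Fin K) (Fin J) ℝ) (α a : Fin K → ℝ) (T : ℝ) (hT : 0 < T)
    (u : ℝ → Fin J → ℝ)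
    (hu_int : ∀ j, IntegrableOn (fun s => u s j) (Icc 0 T))
    (hu_nonneg : ∀ t ∈ Icc (0:ℝ) T, ∀ j, 0 ≤ u t j)
    (x : ℝ → Fin K → ℝ)
    (hx : ∀ t k, x t k = α k + a k * t - ∫ s in (0:ℝ)..t, G.mulVec (u s) k)
    (Ustar : ℝ → Fin J → ℝ)
    (hUstar : ∀ t j, Ustar t j = (t / T) * ∫ s in (0:ℝ)..T, u s j) :
    (∀ j, MonotoneOn (fun t => Ustar t j) (Icc 0 T)) ∧
    (∀ t ∈ Icc (0:ℝ) T, ∀ j, 0 ≤ Ustar t j) ∧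
    ∃ Up Um : ℝ → Fin K → ℝ,
      (∀ k, MonotoneOn (fun t => Up t k) (Icc 0 T)) ∧
      (∀ k, MonotoneOn (fun t => Um t k) (Icc 0 T)) ∧
      (∀ t ∈ Icc (0:ℝ) T, ∀ k, 0 ≤ Up t k ∧ 0 ≤ Um t k) ∧
      (∀ t ∈ Icc (0:ℝ) T, ∀ k,
        Up t k - Um t k = x 0 k + (t / T) * (x T k - x 0 k)) ∧
      (∀ t ∈ Icc (0:ℝ) T, ∀ k,
        G.mulVec (Ustar t) k + (Up t k - Um t k) ≤ α k + a k * t) := by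
  have hu_int' : ∀ j, IntervalIntegrable (fun s => u s j) volume 0 T := fun j =>
    (intervalIntegrable_iff_integrableOn_Icc_of_le hT.le).2 (hu_int j)
  have hmass : ∀ j, 0 ≤ ∫ s in (0:ℝ)..T, u s j := fun j =>
    intervalIntegral.integral_nonneg hT.le fun s hs => hu_nonneg s hs j
  have hUstar_eq : ∀ t, Ustar t = (t / T) • fun j => ∫ s in (0:ℝ)..T, u s j := fun t =>
    funext (hUstar t)
  choose p m hp hm hpm hsub using fun k =>
    exists_monotone_nonneg_sub_eq_affine (x 0 k) ((x T k - x 0 k) / T)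
  refine ⟨fun j t₁ _ t₂ _ h => ?_, fun t ht j => ?_,
    fun t k => p k t, fun t k => m k t, fun k => (hp k).monotoneOn _, fun k => (hm k).monotoneOn _,
    fun t ht k => hpm k t ht.1, fun t _ k => ?_, fun t _ k => ?_⟩
  · simp only [hUstar]
    gcongr
    exact hmass j
  · rw [hUstar]
    exact mul_nonneg (div_nonneg ht.1 hT.le) (hmass j)
  · rw [hsub]
    ring
  · refine le_of_eq ?_
    rw [hsub, hUstar_eq, Matrix.mulVec_smul, Pi.smul_apply, smul_eq_mul,
      G.mulVec_intervalIntegral hu_int', hx T, hx 0, intervalIntegral.integral_same]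
    field_simp
    ring

/-- A feasible SCLP solution yields a feasible solution of the M-CLP extension:
with Ũ*(t) = (t/T)∫₀ᵀ u and Ũ_f(t) = x(0) + (t/T)(x(T)-x(0)) split as a
difference Ũ⁺ - Ũ⁻ of nondecreasing nonnegative functions, the cumulative
controls are nonnegative, nondecreasing, and satisfy the extension constraints
G Ũ*(t) + Ũ⁺(t) - Ũ⁻(t) ≤ α + a t on [0,T]. -/
theorem sclp_feasible_implies_mclp_extension_feasible {K J : ℕ}
    (G : Matrix (Fin K) (Fin J) ℝ) (α a : Fin K → ℝ) (T : ℝ) (hT : 0 < T)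
    (u : ℝ → Fin J → ℝ)
    (hu_int : ∀ j, IntegrableOn (fun s => u s j) (Icc 0 T))
    (hu_nonneg : ∀ t ∈ Icc (0:ℝ) T, ∀ j, 0 ≤ u t j)
    (hfeas : ∀ t ∈ Icc (0:ℝ) T, ∀ k,
      (∫ s in (0:ℝ)..t, G.mulVec (u s) k) ≤ α k + a k * t)
    (x : ℝ → Fin K → ℝ)
    (hx : ∀ t k, x t k = α k + a k * t - ∫ s in (0:ℝ)..t, G.mulVec (u s) k)
    (Ustar : ℝ → Fin J → ℝ)
    (hUstar : ∀ t j, Ustar t j = (t / T) * ∫ s in (0:ℝ)..T, u s j) :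
    (∀ j, MonotoneOn (fun t => Ustar t j) (Icc 0 T)) ∧
    (∀ t ∈ Icc (0:ℝ) T, ∀ j, 0 ≤ Ustar t j) ∧
    ∃ Up Um : ℝ → Fin K → ℝ,
      (∀ k, MonotoneOn (fun t => Up t k) (Icc 0 T)) ∧
      (∀ k, MonotoneOn (fun t => Um t k) (Icc 0 T)) ∧
      (∀ t ∈ Icc (0:ℝ) T, ∀ k, 0 ≤ Up t k ∧ 0 ≤ Um t k) ∧
      (∀ t ∈ Icc (0:ℝ) T, ∀ k,
        Up t k - Um t k = x 0 k + (t / T) * (x T k - x 0 k)) ∧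
      (∀ t ∈ Icc (0:ℝ) T, ∀ k,
        G.mulVec (Ustar t) k + (Up t k - Um t k) ≤ α k + a k * t) :=
  sclp_feasible_implies_mclp_extension_feasible_general G α a T hT u hu_int hu_nonneg x hx Ustar
    hUstar
end

section
/- Consider the SCLP problem with G = 1 (scalar), α ≥ 0, a > 0, γ > 0, c > 0 and no other constraints. Then SCLP (maximize ∫₀ᵀ (γ+(T−t)c)u(t)dt subject to ∫₀ᵗ u(s)ds ≤ α+at, u ≥ 0) is feasible and bounded, its symmetric dual SCLP* is infeasible, and the supremum of the SCLP objective equals γ(α + aT) + cT(α + aT/2). -/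
/-!
Integrating by parts against the primitive `U t = ∫₀ᵗ u` turns the objective into
`γ U(T) + c ∫₀ᵀ U`, which the constraint `U t ≤ α + a t` bounds by the claimed value.
The bound is approached but not attained: the controls `a + (α/ε) 1_{[0,ε]}` release the
initial stock `α` within time `ε` and lose only `α c ε / 2`. The dual constraint fails at
`t = 0`, where it reads `γ ≤ 0`.
-/

open Set MeasureTheory

/-- The set of attainable objective values of the scalar SCLP:
maximize ∫₀ᵀ (γ+(T-t)c)u(t)dt over u ≥ 0 with ∫₀ᵗ u ≤ α + at on [0,T]. -/
def sclpValues (α a γ c T : ℝ) : Set ℝ :=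
  {z | ∃ u : ℝ → ℝ, IntegrableOn u (Icc 0 T) ∧ (∀ t ∈ Icc (0:ℝ) T, 0 ≤ u t) ∧
    (∀ t ∈ Icc (0:ℝ) T, (∫ s in (0:ℝ)..t, u s) ≤ α + a * t) ∧
    z = ∫ t in (0:ℝ)..T, (γ + (T - t) * c) * u t}

open Filter Topology

theorem AbsolutelyContinuousOnInterval.integral_mul_eq_sub_integral_deriv_mul_primitive
    {g f : ℝ → ℝ} {a b : ℝ} (hg : AbsolutelyContinuousOnInterval g a b)
    (hf : IntervalIntegrable f volume a b) :
    ∫ x in a..b, g x * f x =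
      g b * (∫ x in a..b, f x) - ∫ x in a..b, deriv g x * ∫ y in a..x, f y := by
  have hF := hf.absolutelyContinuousOnInterval_intervalIntegral (c := a) left_mem_uIcc
  have hderiv : ∀ᵐ x, x ∈ uIoc a b → g x * f x = g x * deriv (fun x ↦ ∫ y in a..x, f y) x := by
    filter_upwards [hf.ae_hasDerivAt_integral] with x hx hxab
    rw [(hx (uIoc_subset_uIcc hxab) a left_mem_uIcc).deriv]
  rw [intervalIntegral.integral_congr_ae hderiv, hg.integral_mul_deriv_eq_deriv_mul hF,
    intervalIntegral.integral_same, mul_zero, sub_zero]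

theorem IntervalIntegrable.indicator {E : Type*} [NormedAddCommGroup E] {f : ℝ → E}
    {μ : Measure ℝ} {a b : ℝ} (hf : IntervalIntegrable f μ a b) {s : Set ℝ}
    (hs : MeasurableSet s) : IntervalIntegrable (s.indicator f) μ a b :=
  ⟨hf.1.indicator hs, hf.2.indicator hs⟩

theorem intervalIntegral.integral_indicator_Iic_const {E : Type*} [NormedAddCommGroup E]
    [NormedSpace ℝ E] [CompleteSpace E] {ε t : ℝ} (k : E) (hε : 0 ≤ ε) (ht : 0 ≤ t) :
    ∫ s in (0:ℝ)..t, (Iic ε).indicator (fun _ ↦ k) s = min t ε • k := by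
  rw [intervalIntegral.integral_of_le ht, integral_indicator_const _ measurableSet_Iic,
    measureReal_restrict_apply measurableSet_Iic, inter_comm, Ioc_inter_Iic,
    Real.volume_real_Ioc_of_le (le_min ht hε), sub_zero]

section SCLP

variable {α a γ c T : ℝ}

theorem sclp_objective_eq (u : ℝ → ℝ) (hu : IntervalIntegrable u volume 0 T) :
    ∫ t in (0:ℝ)..T, (γ + (T - t) * c) * u t =
      γ * (∫ t in (0:ℝ)..T, u t) + c * ∫ s in (0:ℝ)..T, ∫ t in (0:ℝ)..s, u t := by
  have hw : ContDiff ℝ 1 (fun t : ℝ ↦ γ + (T - t) * c) := by fun_prop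
  rw [hw.contDiffOn.absolutelyContinuousOnInterval
    |>.integral_mul_eq_sub_integral_deriv_mul_primitive hu]
  simp

theorem mem_upperBounds_sclpValues (hγ : 0 ≤ γ) (hc : 0 ≤ c) (hT : 0 ≤ T) :
    γ * (α + a * T) + c * T * (α + a * T / 2) ∈ upperBounds (sclpValues α a γ c T) := by
  rintro _ ⟨u, hu, -, hcon, rfl⟩
  have huT : IntervalIntegrable u volume 0 T :=
    (intervalIntegrable_iff_integrableOn_Icc_of_le hT).2 hu
  have hprimitive : ∫ s in (0:ℝ)..T, ∫ t in (0:ℝ)..s, u t ≤ ∫ s in (0:ℝ)..T, (α + a * s) :=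
    intervalIntegral.integral_mono_on hT
      (intervalIntegral.continuousOn_primitive_interval' huT left_mem_uIcc).intervalIntegrable
      ((continuous_const.add (continuous_const_mul a)).intervalIntegrable 0 T) hcon
  have hlinear : ∫ s in (0:ℝ)..T, (α + a * s) = T * (α + a * T / 2) := by
    rw [intervalIntegral.integral_add intervalIntegrable_const
      (intervalIntegral.intervalIntegrable_id.const_mul a), intervalIntegral.integral_const,
      intervalIntegral.integral_const_mul, integral_id, smul_eq_mul]
    ring
  calc ∫ t in (0:ℝ)..T, (γ + (T - t) * c) * u t
      = γ * (∫ t in (0:ℝ)..T, u t) + c * ∫ s in (0:ℝ)..T, ∫ t in (0:ℝ)..s, u t :=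
        sclp_objective_eq u huT
    _ ≤ γ * (α + a * T) + c * ∫ s in (0:ℝ)..T, (α + a * s) := by
        gcongr
        exact hcon T ⟨hT, le_rfl⟩
    _ = γ * (α + a * T) + c * T * (α + a * T / 2) := by rw [hlinear]; ring

theorem sub_mem_sclpValues (hα : 0 ≤ α) (ha : 0 ≤ a) {ε : ℝ} (hε : ε ∈ Ioc 0 T) :
    γ * (α + a * T) + c * T * (α + a * T / 2) - α * c * ε / 2 ∈ sclpValues α a γ c T := by
  obtain ⟨hε0, hεT⟩ := hε
  refine ⟨fun t ↦ a + (Iic ε).indicator (fun _ ↦ α / ε) t, ?_, ?_, ?_, ?_⟩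
  · exact (integrable_const a).add ((integrable_const _).indicator measurableSet_Iic)
  · exact fun t _ ↦ add_nonneg ha (indicator_nonneg (fun _ _ ↦ div_nonneg hα hε0.le) t)
  · intro t ht
    rw [intervalIntegral.integral_add intervalIntegrable_const
        (intervalIntegrable_const.indicator measurableSet_Iic), intervalIntegral.integral_const,
      intervalIntegral.integral_indicator_Iic_const _ hε0.le ht.1, sub_zero, smul_eq_mul,
      smul_eq_mul]
    have hstock : min t ε * (α / ε) ≤ α :=
      calc min t ε * (α / ε) ≤ ε * (α / ε) := by gcongr; exact min_le_right t ε
        _ = α := mul_div_cancel₀ α hε0.ne'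
    linarith
  · have hw : Continuous fun t : ℝ ↦ γ + (T - t) * c := by fun_prop
    have hw_integral (b : ℝ) :
        ∫ t in (0:ℝ)..b, (γ + (T - t) * c) = (γ + T * c) * b - c * b ^ 2 / 2 := by
      simp [intervalIntegral.integral_add, intervalIntegral.integral_sub, sub_mul,
        intervalIntegral.intervalIntegrable_id.mul_const]
      ring
    have hintegrand :
        (fun t ↦ (γ + (T - t) * c) * (a + (Iic ε).indicator (fun _ ↦ α / ε) t)) = fun t ↦
          (γ + (T - t) * c) * a + (Iic ε).indicator (fun t ↦ α / ε * (γ + (T - t) * c)) t := by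
      ext t
      rw [indicator_mul_left]
      ring
    rw [hintegrand, intervalIntegral.integral_add ((hw.intervalIntegrable 0 T).mul_const a)
      ((hw.intervalIntegrable 0 T).const_mul _ |>.indicator measurableSet_Iic),
      intervalIntegral.integral_mul_const, ← Iic_def,
      intervalIntegral.integral_indicator ⟨hε0.le, hεT⟩, intervalIntegral.integral_const_mul, hw_integral, hw_integral]
    field_simp
    ring

theorem isLUB_sclpValues (hα : 0 ≤ α) (ha : 0 ≤ a) (hγ : 0 ≤ γ) (hc : 0 ≤ c) (hT : 0 < T) :
    IsLUB (sclpValues α a γ c T) (γ * (α + a * T) + c * T * (α + a * T / 2)) := by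
  set L := γ * (α + a * T) + c * T * (α + a * T / 2)
  have hlim : Tendsto (fun ε ↦ L - α * c * ε / 2) (𝓝[>] 0) (𝓝 L) := by
    have : Continuous fun ε : ℝ ↦ L - α * c * ε / 2 := by fun_prop
    simpa using (this.tendsto 0).mono_left nhdsWithin_le_nhds
  refine isLUB_of_mem_closure (mem_upperBounds_sclpValues hγ hc hT.le)
    (mem_closure_of_tendsto hlim ?_)
  filter_upwards [Ioc_mem_nhdsGT hT] with ε hε using sub_mem_sclpValues hα ha hε

end SCLP

/-- Scalar SCLP with G=1, α ≥ 0, a > 0, γ > 0, c > 0: SCLP is feasible and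
bounded, its dual SCLP* is infeasible (the constraint ∫₀ᵗp ≥ γ > 0 fails at
t=0), and sup V(SCLP) = γ(α+aT) + cT(α+aT/2). -/
theorem sclp_case1_dual_infeasible (α a γ c T : ℝ)
    (hα : 0 ≤ α) (ha : 0 < a) (hγ : 0 < γ) (hc : 0 < c) (hT : 0 < T) :
    (sclpValues α a γ c T).Nonempty ∧
    BddAbove (sclpValues α a γ c T) ∧
    (¬ ∃ p : ℝ → ℝ, IntegrableOn p (Icc 0 T) ∧ (∀ t ∈ Icc (0:ℝ) T, 0 ≤ p t) ∧
        ∀ t ∈ Icc (0:ℝ) T, γ + c * t ≤ ∫ s in (0:ℝ)..t, p s) ∧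
    sSup (sclpValues α a γ c T) = γ * (α + a * T) + c * T * (α + a * T / 2) := by
  have hLUB := isLUB_sclpValues hα ha.le hγ.le hc.le hT
  have hne : (sclpValues α a γ c T).Nonempty :=
    ⟨_, sub_mem_sclpValues (ε := T) hα ha.le ⟨hT, le_rfl⟩⟩
  refine ⟨hne, ⟨_, hLUB.1⟩, ?_, hLUB.csSup_eq hne⟩
  rintro ⟨p, -, -, hp⟩
  have h0 := hp 0 ⟨le_rfl, hT.le⟩
  rw [mul_zero, add_zero, intervalIntegral.integral_same] at h0
  exact hγ.not_ge h0
end
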